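/- There exists a smooth map F : (0,∞) × [0,1] → ℝ² such that for every t ∈ [0,1] the map x ↦ F(x,t) is a (topological and smooth) embedding of (0,∞) into ℝ², but the track G(x,t) = (F(x,t), t) is not a homeomorphism onto its image; i.e., the track of an isotopy of embeddings need not be an embedding. -/

import Mathlib

open Set Filter Topology

/-- The isotopy: an analytic "hook". -/
noncomputable def Fc (x t : ℝ) : ℝ × ℝ :=
  (x * (1 - (t*x)^2) / (1 + (t*x)^2), t^3 * x^2 / (1 + (t*x)^2))

lemma denom_pos (x t : ℝ) : 0 < 1 + (t*x)^2 := by positivity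

lemma Fc_zero (x : ℝ) : Fc x 0 = (x, 0) := by simp [Fc]

lemma contDiff_Fc : ContDiff ℝ (⊤ : ℕ∞) (fun p : ℝ × ℝ => Fc p.1 p.2) := by
  unfold Fc
  apply ContDiff.prodMk
  · exact (contDiff_fst.mul (contDiff_const.sub ((contDiff_snd.mul contDiff_fst).pow 2))).div
      (contDiff_const.add ((contDiff_snd.mul contDiff_fst).pow 2))
      (fun p => (denom_pos p.1 p.2).ne')
  · exact ((contDiff_snd.pow 3).mul (contDiff_fst.pow 2)).div
      (contDiff_const.add ((contDiff_snd.mul contDiff_fst).pow 2))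
      (fun p => (denom_pos p.1 p.2).ne')

lemma contDiff_slice (t : ℝ) : ContDiff ℝ (⊤ : ℕ∞) (fun x => Fc x t) := by
  have : (fun x => Fc x t) = (fun p : ℝ × ℝ => Fc p.1 p.2) ∘ (fun x : ℝ => (x, t)) := rfl
  rw [this]
  exact contDiff_Fc.comp (contDiff_id.prodMk contDiff_const)

/-- second coordinate is strictly monotone for `t > 0`. -/
lemma vmono {t : ℝ} (ht : 0 < t) :
    StrictMonoOn (fun x : ℝ => t^3 * x^2 / (1 + (t*x)^2)) (Set.Ioi 0) := by
  intro a ha b hb hab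
  have ha' : (0:ℝ) < a := ha
  simp only
  rw [div_lt_div_iff₀ (denom_pos a t) (denom_pos b t)]
  have h3 : (0:ℝ) < t^3 := by positivity
  have hab2 : a^2 < b^2 := by nlinarith
  nlinarith [mul_pos h3 (sub_pos.2 hab2)]

/-- a continuous function strictly monotone on `Ioi 0` restricts to an embedding. -/
lemma emb_aux {g : ℝ → ℝ} (hg : Continuous g) (hm : StrictMonoOn g (Set.Ioi 0)) :
    Topology.IsEmbedding fun x : Set.Ioi (0:ℝ) => g ↑x := by
  have hsm : StrictMono fun x : Set.Ioi (0:ℝ) => g ↑x := fun a b h => hm a.2 b.2 h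
  refine hsm.isEmbedding_of_ordConnected ?_
  rw [← Set.image_eq_range]
  exact (isPreconnected_Ioi.image g hg.continuousOn).ordConnected

/-- There is an isotopy of embeddings `F : (0,∞) × [0,1] → ℝ²` (a smooth map all
of whose time slices are smooth embeddings) whose track `(x,t) ↦ (F x t, t)` is
not a homeomorphism onto its image. -/
theorem track_of_isotopy_need_not_be_embedding :
    ∃ F : ℝ → ℝ → ℝ × ℝ,
      ContDiffOn ℝ (⊤ : ℕ∞) (fun p : ℝ × ℝ => F p.1 p.2) (Set.Ioi (0 : ℝ) ×ˢ Set.Icc (0 : ℝ) 1) ∧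
      (∀ t ∈ Set.Icc (0 : ℝ) 1,
        ContDiffOn ℝ (⊤ : ℕ∞) (fun x => F x t) (Set.Ioi (0 : ℝ)) ∧
        Set.InjOn (fun x => F x t) (Set.Ioi (0 : ℝ)) ∧
        (∀ x ∈ Set.Ioi (0 : ℝ), deriv (fun x => F x t) x ≠ 0) ∧
        Topology.IsEmbedding (fun x : Set.Ioi (0 : ℝ) => F x t)) ∧
      ¬ Topology.IsEmbedding
          (fun p : Set.Ioi (0 : ℝ) × Set.Icc (0 : ℝ) 1 =>
            (F p.1 p.2, (p.2 : ℝ))) := by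
  refine ⟨Fc, contDiff_Fc.contDiffOn, ?_, ?_⟩
  · intro t htmem
    obtain ⟨ht0, ht1⟩ := htmem
    rcases ht0.eq_or_lt with rfl | htpos
    · -- t = 0
      refine ⟨(contDiff_slice 0).contDiffOn, ?_, ?_, ?_⟩
      · intro a _ b _ hab
        simpa [Fc_zero, Prod.ext_iff] using hab
      · intro x _
        have hrw : (fun x : ℝ => Fc x 0) = fun x : ℝ => (x, (0:ℝ)) := funext Fc_zero
        rw [hrw]
        have hd : HasDerivAt (fun x : ℝ => (x, (0:ℝ))) (1, 0) x :=
          (hasDerivAt_id x).prodMk (hasDerivAt_const x 0)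
        rw [hd.deriv]
        simp [Prod.ext_iff]
      · have hrw : (fun x : Set.Ioi (0:ℝ) => Fc ↑x 0)
            = fun x : Set.Ioi (0:ℝ) => ((x:ℝ), (0:ℝ)) := funext fun x => Fc_zero x
        rw [hrw]
        refine Topology.IsEmbedding.of_comp ?_ continuous_fst ?_
        · exact continuous_subtype_val.prodMk continuous_const
        · exact Topology.IsEmbedding.subtypeVal
    · -- t > 0
      have hFeq : (fun x : ℝ => Fc x t)
          = fun x : ℝ => (x*(1-(t*x)^2)/(1+(t*x)^2), t^3*x^2/(1+(t*x)^2)) := rfl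
      refine ⟨(contDiff_slice t).contDiffOn, ?_, ?_, ?_⟩
      · intro a ha b hb hab
        have h2 := congrArg Prod.snd hab
        exact (vmono htpos).injOn ha hb h2
      · intro x hx
        have hx' : (0:ℝ) < x := hx
        have hden := (denom_pos x t).ne'
        have hfdiff : DifferentiableAt ℝ (fun x : ℝ => x * (1 - (t*x)^2) / (1 + (t*x)^2)) x :=
          DifferentiableAt.div (by fun_prop) (by fun_prop) hden
        have h1 : HasDerivAt (fun x : ℝ => t^3 * x^2) (t^3 * (2*x)) x := by
          simpa using (hasDerivAt_pow 2 x).const_mul (t^3)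
        have hlin : HasDerivAt (fun x : ℝ => t*x) t x := by
          simpa using (hasDerivAt_id x).const_mul t
        have h2 : HasDerivAt (fun x : ℝ => 1 + (t*x)^2) (2*(t*x)*t) x := by
          have := (hlin.pow 2).const_add 1
          refine this.congr_deriv ?_
          push_cast
          ring
        have hv : HasDerivAt (fun x : ℝ => t^3*x^2 / (1 + (t*x)^2))
            ((t^3*(2*x) * (1 + (t*x)^2) - t^3*x^2 * (2*(t*x)*t)) / (1 + (t*x)^2)^2) x :=
          h1.div h2 hden
        have hpair := (hfdiff.hasDerivAt.prodMk hv)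
        rw [hFeq, hpair.deriv]
        have hnum : t^3*(2*x) * (1 + (t*x)^2) - t^3*x^2 * (2*(t*x)*t) = 2*t^3*x := by ring
        have hpos : 0 < (t^3*(2*x) * (1 + (t*x)^2) - t^3*x^2 * (2*(t*x)*t)) / (1 + (t*x)^2)^2 := by
          apply div_pos
          · rw [hnum]; positivity
          · positivity
        rw [Ne, Prod.ext_iff]
        rintro ⟨-, h⟩
        exact hpos.ne' h
      · refine Topology.IsEmbedding.of_comp ?_ continuous_snd ?_
        · exact (contDiff_slice t).continuous.comp continuous_subtype_val
        · have hrw : (Prod.snd ∘ fun x : Set.Ioi (0:ℝ) => Fc ↑x t)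
              = fun x : Set.Ioi (0:ℝ) => t^3*(x:ℝ)^2/(1+(t*(x:ℝ))^2) := rfl
          rw [hrw]
          refine emb_aux ?_ (vmono htpos)
          exact Continuous.div (by fun_prop) (by fun_prop) (fun x => (denom_pos x t).ne')
  · intro hEmb
    -- pick x n with first coordinate exactly 1 at time (n+4)⁻¹
    have key : ∀ n : ℕ, ∃ x : ℝ, ((n:ℝ)+4)/2 ≤ x ∧ x ≤ (n:ℝ)+4
        ∧ (Fc x (((n:ℝ)+4)⁻¹)).1 = 1 := by
      intro n
      have hNpos : (0:ℝ) < (n:ℝ)+4 := by positivity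
      set N : ℝ := (n:ℝ)+4 with hN
      have hN4 : (4:ℝ) ≤ N := by
        rw [hN]; linarith [Nat.cast_nonneg (α := ℝ) n]
      set t : ℝ := N⁻¹ with htdef
      have ht : 0 < t := inv_pos.2 hNpos
      have hcont : ContinuousOn (fun x => (Fc x t).1) (Set.Icc (N/2) N) :=
        ((contDiff_slice t).continuous.fst).continuousOn
      have hab : N/2 ≤ N := by linarith
      have hima := intermediate_value_Icc' hab hcont
      have htN : t*N = 1 := inv_mul_cancel₀ hNpos.ne'
      have htN2 : t*(N/2) = 1/2 := by
        rw [show t*(N/2) = (t*N)/2 by ring, htN]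
      have hfb : (Fc N t).1 = 0 := by
        show N*(1-(t*N)^2)/(1+(t*N)^2) = 0
        rw [htN]; norm_num
      have hfa : 1 ≤ (Fc (N/2) t).1 := by
        show 1 ≤ (N/2)*(1-(t*(N/2))^2)/(1+(t*(N/2))^2)
        rw [htN2]
        have : (N/2)*(1-(1/2:ℝ)^2)/(1+(1/2:ℝ)^2) = 3*N/10 := by ring
        rw [this]; linarith
      have h1mem : (1:ℝ) ∈ Set.Icc ((Fc N t).1) ((Fc (N/2) t).1) := by
        rw [hfb]; exact ⟨by norm_num, hfa⟩
      obtain ⟨x, hxmem, hfx⟩ := hima h1mem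
      exact ⟨x, hxmem.1, hxmem.2, hfx⟩
    choose xs hxs1 hxs2 hxs3 using key
    have hxpos : ∀ n : ℕ, (0:ℝ) < xs n := fun n =>
      lt_of_lt_of_le (by positivity) (hxs1 n)
    have htmem : ∀ n : ℕ, ((n:ℝ)+4)⁻¹ ∈ Set.Icc (0:ℝ) 1 := by
      intro n
      constructor
      · positivity
      · rw [inv_le_one₀ (by positivity)]
        linarith [Nat.cast_nonneg (α := ℝ) n]
    set p : ℕ → ↥(Set.Ioi (0:ℝ)) × ↥(Set.Icc (0:ℝ) 1) := fun n =>
      (⟨xs n, hxpos n⟩, ⟨((n:ℝ)+4)⁻¹, htmem n⟩) with hp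
    set q : ↥(Set.Ioi (0:ℝ)) × ↥(Set.Icc (0:ℝ) 1) :=
      (⟨1, by norm_num⟩, ⟨0, by norm_num⟩) with hqdef
    have httend : Tendsto (fun n : ℕ => ((n:ℝ)+4)⁻¹) atTop (𝓝 0) := by
      apply tendsto_inv_atTop_zero.comp
      exact tendsto_atTop_add_const_right atTop 4 tendsto_natCast_atTop_atTop
    have hvle : ∀ n : ℕ, (Fc (xs n) (((n:ℝ)+4)⁻¹)).2 ≤ ((n:ℝ)+4)⁻¹ := by
      intro n
      set t : ℝ := ((n:ℝ)+4)⁻¹ with htdef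
      have ht : (0:ℝ) < t := by positivity
      show t^3*(xs n)^2/(1+(t*(xs n))^2) ≤ t
      rw [div_le_iff₀ (denom_pos _ _)]
      nlinarith [sq_nonneg (t*(xs n))]
    have hvnonneg : ∀ n : ℕ, (0:ℝ) ≤ (Fc (xs n) (((n:ℝ)+4)⁻¹)).2 := by
      intro n
      show (0:ℝ) ≤ (((n:ℝ)+4)⁻¹)^3*(xs n)^2/(1+((((n:ℝ)+4)⁻¹)*(xs n))^2)
      positivity
    have hvtend : Tendsto (fun n : ℕ => (Fc (xs n) (((n:ℝ)+4)⁻¹)).2) atTop (𝓝 0) :=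
      squeeze_zero hvnonneg hvle httend
    have htrack : Tendsto
        ((fun r : ↥(Set.Ioi (0:ℝ)) × ↥(Set.Icc (0:ℝ) 1) => (Fc ↑r.1 ↑r.2, (↑r.2:ℝ))) ∘ p)
        atTop (𝓝 ((fun r : ↥(Set.Ioi (0:ℝ)) × ↥(Set.Icc (0:ℝ) 1) => (Fc ↑r.1 ↑r.2, (↑r.2:ℝ))) q)) := by
      have hGq : (fun r : ↥(Set.Ioi (0:ℝ)) × ↥(Set.Icc (0:ℝ) 1) => (Fc ↑r.1 ↑r.2, (↑r.2:ℝ))) q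
          = (((1:ℝ),(0:ℝ)), (0:ℝ)) := by
        show (Fc 1 0, (0:ℝ)) = (((1:ℝ),(0:ℝ)), (0:ℝ))
        rw [Fc_zero]
      rw [hGq]
      have heq : ∀ n : ℕ,
          ((fun r : ↥(Set.Ioi (0:ℝ)) × ↥(Set.Icc (0:ℝ) 1) => (Fc ↑r.1 ↑r.2, (↑r.2:ℝ))) ∘ p) n
          = (((1:ℝ), (Fc (xs n) (((n:ℝ)+4)⁻¹)).2), ((n:ℝ)+4)⁻¹) := by
        intro n
        show (Fc (xs n) (((n:ℝ)+4)⁻¹), ((n:ℝ)+4)⁻¹)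
            = (((1:ℝ), (Fc (xs n) (((n:ℝ)+4)⁻¹)).2), ((n:ℝ)+4)⁻¹)
        exact congrArg (fun y => (y, ((n:ℝ)+4)⁻¹)) (Prod.ext (hxs3 n) rfl)
      rw [funext heq]
      exact (Tendsto.prodMk_nhds (Tendsto.prodMk_nhds tendsto_const_nhds hvtend) httend)
    have hq : Tendsto p atTop (𝓝 q) := hEmb.tendsto_nhds_iff.mpr htrack
    have hx1 : Tendsto (fun n : ℕ => (xs n : ℝ)) atTop (𝓝 1) := by
      have hc : Continuous (fun r : ↥(Set.Ioi (0:ℝ)) × ↥(Set.Icc (0:ℝ) 1) => ((r.1 : ℝ))) :=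
        continuous_subtype_val.comp continuous_fst
      exact (hc.tendsto q).comp hq
    have h2 := hx1.eventually_lt_const (by norm_num : (1:ℝ) < 2)
    obtain ⟨n, hn⟩ := h2.exists
    have h3 := hxs1 n
    have h4 : (2:ℝ) ≤ ((n:ℝ)+4)/2 := by linarith [Nat.cast_nonneg (α := ℝ) n]
    linarith
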